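/- Let μ > 0. For t ∈ ℝ and r > μ define u₁(t,r) = 2μ·√(1-μ/r)·sinh(t/(2μ)) and u₂(t,r) = 2μ·√(1-μ/r)·cosh(t/(2μ)), and let w : (μ,∞) → ℝ be differentiable with w'(r) = √((r+μ)(r²+μ²)/r³) for all r > μ. Then for all t ∈ ℝ and r > μ: (i) -((∂u₁/∂t)(t,r))² + ((∂u₂/∂t)(t,r))² = -(1 - μ/r); (ii) -((∂u₁/∂r)(t,r))² + ((∂u₂/∂r)(t,r))² + (w'(r))² = 1/(1 - μ/r); (iii) -(∂u₁/∂t)(t,r)·(∂u₁/∂r)(t,r) + (∂u₂/∂t)(t,r)·(∂u₂/∂r)(t,r) = 0. Here ∂/∂t and ∂/∂r denote derivatives of the one-variable slices. -/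

import Mathlib

/-- Fronsdal embedding coordinate `u₁` on the normal region. -/
noncomputable def u1F (μ t r : ℝ) : ℝ :=
  2 * μ * Real.sqrt (1 - μ / r) * Real.sinh (t / (2 * μ))

/-- Fronsdal embedding coordinate `u₂` on the normal region. -/
noncomputable def u2F (μ t r : ℝ) : ℝ :=
  2 * μ * Real.sqrt (1 - μ / r) * Real.cosh (t / (2 * μ))

/-- The Fronsdal isometry identities on the normal region `r > μ` of the
Hilbert-Droste solution. -/
theorem fronsdal_isometry_identities_normal_region (μ : ℝ) (hμ : 0 < μ)
    (w : ℝ → ℝ)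
    (hw : ∀ r : ℝ, μ < r →
      HasDerivAt w (Real.sqrt ((r + μ) * (r ^ 2 + μ ^ 2) / r ^ 3)) r)
    (t r : ℝ) (hr : μ < r) :
    (-(deriv (fun t' => u1F μ t' r) t) ^ 2 + (deriv (fun t' => u2F μ t' r) t) ^ 2
      = -(1 - μ / r)) ∧
    (-(deriv (fun r' => u1F μ t r') r) ^ 2 + (deriv (fun r' => u2F μ t r') r) ^ 2
      + (deriv w r) ^ 2 = 1 / (1 - μ / r)) ∧
    (-(deriv (fun t' => u1F μ t' r) t * deriv (fun r' => u1F μ t r') r)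
      + deriv (fun t' => u2F μ t' r) t * deriv (fun r' => u2F μ t r') r = 0) := by
  have hr0 : 0 < r := hμ.trans hr
  have hμne : μ ≠ 0 := hμ.ne'
  have hs : 0 < 1 - μ / r := by
    have : μ / r < 1 := (div_lt_one hr0).mpr hr
    linarith
  set q := Real.sqrt (1 - μ / r) with hq
  have hss : q ^ 2 = 1 - μ / r := Real.sq_sqrt hs.le
  have hsne : q ≠ 0 := by
    rw [hq]; positivity
  set c := Real.cosh (t / (2 * μ)) with hc
  set h := Real.sinh (t / (2 * μ)) with hh
  have hcs : c ^ 2 - h ^ 2 = 1 := Real.cosh_sq_sub_sinh_sq _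
  -- t-derivatives
  have hdiv : HasDerivAt (fun t' : ℝ => t' / (2 * μ)) (1 / (2 * μ)) t := by
    simpa using (hasDerivAt_id t).div_const (2 * μ)
  have hdt1 : HasDerivAt (fun t' => u1F μ t' r) (q * c) t := by
    have h3 : HasDerivAt (fun t' => 2 * μ * q * Real.sinh (t' / (2 * μ)))
        (2 * μ * q * (c * (1 / (2 * μ)))) t :=
      ((Real.hasDerivAt_sinh (t / (2 * μ))).comp t hdiv).const_mul (2 * μ * q)
    have heq : (fun t' => u1F μ t' r) = fun t' => 2 * μ * q * Real.sinh (t' / (2 * μ)) := by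
      funext t'; simp [u1F, hq]
    rw [heq]
    convert h3 using 1
    field_simp
  have hdt2 : HasDerivAt (fun t' => u2F μ t' r) (q * h) t := by
    have h3 : HasDerivAt (fun t' => 2 * μ * q * Real.cosh (t' / (2 * μ)))
        (2 * μ * q * (h * (1 / (2 * μ)))) t :=
      ((Real.hasDerivAt_cosh (t / (2 * μ))).comp t hdiv).const_mul (2 * μ * q)
    have heq : (fun t' => u2F μ t' r) = fun t' => 2 * μ * q * Real.cosh (t' / (2 * μ)) := by
      funext t'; simp [u2F, hq]
    rw [heq]
    convert h3 using 1
    field_simp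
  -- r-derivative of the square-root factor
  have hg : HasDerivAt (fun r' : ℝ => 1 - μ / r') (μ / r ^ 2) r := by
    have h1 : HasDerivAt (fun r' : ℝ => μ / r') (μ * -(r ^ 2)⁻¹) r := by
      simpa [div_eq_mul_inv] using (hasDerivAt_inv hr0.ne').const_mul μ
    have h2 := h1.const_sub 1
    refine h2.congr_deriv ?_
    ring
  have hq' : HasDerivAt (fun r' : ℝ => Real.sqrt (1 - μ / r'))
      ((μ / r ^ 2) / (2 * q)) r := hg.sqrt hs.ne'
  have hdr1 : HasDerivAt (fun r' => u1F μ t r') (μ ^ 2 / (r ^ 2 * q) * h) r := by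
    have h3 : HasDerivAt (fun r' => 2 * μ * Real.sqrt (1 - μ / r') * h)
        (2 * μ * ((μ / r ^ 2) / (2 * q)) * h) r := (hq'.const_mul (2 * μ)).mul_const h
    have heq : (fun r' => u1F μ t r') = fun r' => 2 * μ * Real.sqrt (1 - μ / r') * h := by
      funext r'; simp [u1F, hh]
    rw [heq]
    convert h3 using 1
    field_simp
  have hdr2 : HasDerivAt (fun r' => u2F μ t r') (μ ^ 2 / (r ^ 2 * q) * c) r := by
    have h3 : HasDerivAt (fun r' => 2 * μ * Real.sqrt (1 - μ / r') * c)
        (2 * μ * ((μ / r ^ 2) / (2 * q)) * c) r := (hq'.const_mul (2 * μ)).mul_const c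
    have heq : (fun r' => u2F μ t r') = fun r' => 2 * μ * Real.sqrt (1 - μ / r') * c := by
      funext r'; simp [u2F, hc]
    rw [heq]
    convert h3 using 1
    field_simp
  have hA : (0:ℝ) ≤ (r + μ) * (r ^ 2 + μ ^ 2) / r ^ 3 := by positivity
  have hW : (deriv w r) ^ 2 = (r + μ) * (r ^ 2 + μ ^ 2) / r ^ 3 := by
    rw [(hw r hr).deriv]
    exact Real.sq_sqrt hA
  rw [hdt1.deriv, hdt2.deriv, hdr1.deriv, hdr2.deriv, hW]
  refine ⟨?_, ?_, ?_⟩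
  · linear_combination (h ^ 2 - c ^ 2) * hss - (1 - μ / r) * hcs
  · have hc2 : c ^ 2 = h ^ 2 + 1 := by linarith
    simp only [div_pow, mul_pow, hss, hc2]
    have hrm : r - μ ≠ 0 := sub_ne_zero.mpr hr.ne'
    field_simp
    ring
  · ring
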